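/- arXiv:1310.8216 — 4 statements merged into one kernel-verified Lean document; each statement's English description precedes it below -/
import Mathlib

section
/- For |x| < 1/4, the second derivative of the Catalan generating function satisfies T''(x) = 2 T(x)^5 (2 - x T(x)^2) / (1 - x T(x)^2)^3. -/
/-- The generating function of the Catalan numbers, `T(x) = ∑ Cat(k) xᵏ`. -/
noncomputable def catalanGF (x : ℝ) : ℝ := ∑' k : ℕ, (catalan k : ℝ) * x ^ k

/-!
On `|x| < 1/4` the Catalan series converges absolutely (`catalan n ≤ 4 ^ n`), so `T` is analytic
there, and Segner's recurrence identifies the Cauchy product `T²` with `∑ Cat(n+1) xⁿ`, whence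
`T = 1 + x T²`. Differentiating this identity and using `x T² = T - 1` gives `T' = T³ / (2 - T)`;
differentiating once more and substituting `1 - x T² = 2 - T`, `2 - x T² = 3 - T` gives the
formula. All denominators are nonzero because `T = 2` would force `x = 1/4`.
-/

open Finset FormalMultilinearSeries Filter Topology
open scoped NNReal ENNReal

theorem eventually_abs_lt {x r : ℝ} (hx : |x| < r) : ∀ᶠ z in 𝓝 x, |z| < r :=
  continuous_abs.continuousAt.eventually_lt continuousAt_const hx

theorem catalan_le_four_pow (n : ℕ) : catalan n ≤ 4 ^ n :=
  calc catalan n ≤ (n + 1) * catalan n := Nat.le_mul_of_pos_left _ n.succ_pos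
    _ = n.centralBinom := succ_mul_catalan_eq_centralBinom n
    _ ≤ 4 ^ n := Nat.centralBinom_le_four_pow n

noncomputable def catalanSeries : FormalMultilinearSeries ℝ ℝ ℝ :=
  ofScalars ℝ fun n ↦ (catalan n : ℝ)

theorem catalanSeries_sum : catalanSeries.sum = catalanGF := by
  funext x
  simp [catalanSeries, ← ofScalarsSum.eq_def, ofScalars_sum_eq, catalanGF]

theorem norm_catalanSeries_le (n : ℕ) : ‖catalanSeries n‖ ≤ 4 ^ n := by
  simpa [catalanSeries, ofScalars_norm] using
    (mod_cast catalan_le_four_pow n : (catalan n : ℝ) ≤ 4 ^ n)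

theorem le_radius_catalanSeries : ((1 / 4 : ℝ≥0) : ℝ≥0∞) ≤ catalanSeries.radius :=
  catalanSeries.le_radius_of_bound 1 fun n ↦
    calc ‖catalanSeries n‖ * ((1 / 4 : ℝ≥0) : ℝ) ^ n ≤ 4 ^ n * (1 / 4) ^ n := by
          gcongr
          · exact norm_catalanSeries_le n
          · simp
      _ = 1 := by rw [← mul_pow]; norm_num

theorem mem_eball_radius_catalanSeries {x : ℝ} (hx : |x| < 1 / 4) :
    x ∈ Metric.eball 0 catalanSeries.radius := by
  rw [Metric.mem_eball, edist_zero_right]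
  refine lt_of_lt_of_le ?_ le_radius_catalanSeries
  rw [← ofReal_norm, ENNReal.ofReal_lt_iff_lt_toReal (norm_nonneg x) (by simp)]
  simpa using hx

theorem summable_norm_catalan_mul_pow {x : ℝ} (hx : |x| < 1 / 4) :
    Summable fun n ↦ ‖(catalan n : ℝ) * x ^ n‖ := by
  simpa [catalanSeries, ofScalars_apply_eq, mul_comm] using
    catalanSeries.summable_norm_apply (mem_eball_radius_catalanSeries hx)

theorem analyticAt_catalanGF {x : ℝ} (hx : |x| < 1 / 4) : AnalyticAt ℝ catalanGF x := by
  have hpos : 0 < catalanSeries.radius :=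
    lt_of_lt_of_le (by simp) le_radius_catalanSeries
  rw [← catalanSeries_sum]
  exact (catalanSeries.hasFPowerSeriesOnBall hpos).analyticAt_of_mem
    (mem_eball_radius_catalanSeries hx)

theorem catalanGF_sq_eq_tsum {x : ℝ} (hx : |x| < 1 / 4) :
    catalanGF x ^ 2 = ∑' n : ℕ, (catalan (n + 1) : ℝ) * x ^ n := by
  have hs := summable_norm_catalan_mul_pow hx
  rw [sq, catalanGF, tsum_mul_tsum_eq_tsum_sum_antidiagonal_of_summable_norm hs hs]
  refine tsum_congr fun n ↦ ?_
  rw [catalan_succ', Nat.cast_sum, sum_mul]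
  refine sum_congr rfl fun ij hij ↦ ?_
  rw [← mem_antidiagonal.mp hij]
  push_cast
  ring

theorem catalanGF_eq_one_add_mul_sq {x : ℝ} (hx : |x| < 1 / 4) :
    catalanGF x = 1 + x * catalanGF x ^ 2 := by
  rw [catalanGF_sq_eq_tsum hx, ← tsum_mul_left, catalanGF,
    (summable_norm_catalan_mul_pow hx).of_norm.tsum_eq_zero_add]
  simp only [catalan_zero, Nat.cast_one, pow_zero, mul_one, pow_succ]
  congr 1
  exact tsum_congr fun n ↦ by ring

theorem catalanGF_ne_two {x : ℝ} (hx : |x| < 1 / 4) : catalanGF x ≠ 2 := by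
  intro h
  have := catalanGF_eq_one_add_mul_sq hx
  rw [h] at this
  linarith [(abs_lt.mp hx).2]

theorem hasDerivAt_catalanGF {x : ℝ} (hx : |x| < 1 / 4) :
    HasDerivAt catalanGF (catalanGF x ^ 3 / (2 - catalanGF x)) x := by
  obtain ⟨T', hT⟩ : ∃ T', HasDerivAt catalanGF T' x :=
    ⟨_, (analyticAt_catalanGF hx).differentiableAt.hasDerivAt⟩
  have hquad : catalanGF =ᶠ[𝓝 x] fun z ↦ 1 + z * catalanGF z ^ 2 :=
    (eventually_abs_lt hx).mono fun z hz ↦ catalanGF_eq_one_add_mul_sq hz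
  have himplicit : T' = catalanGF x ^ 2 + 2 * x * catalanGF x * T' :=
    hT.unique <| ((((hasDerivAt_id' x).mul (hT.fun_pow 2)).const_add 1).congr_of_eventuallyEq
      hquad).congr_deriv (by ring)
  have h2 : 2 - catalanGF x ≠ 0 := sub_ne_zero.mpr (catalanGF_ne_two hx).symm
  have hT' : catalanGF x ^ 3 / (2 - catalanGF x) = T' := by
    rw [div_eq_iff h2]
    linear_combination (-catalanGF x) * himplicit + 2 * T' * catalanGF_eq_one_add_mul_sq hx
  rwa [hT']

/-- For `|x| < 1/4`, the second derivative of the Catalan generating function satisfies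
`T''(x) = 2 T(x)⁵ (2 - x T(x)²) / (1 - x T(x)²)³`. -/
theorem hasDerivAt_deriv_catalanGF (x : ℝ) (hx : |x| < 1/4) :
    HasDerivAt (deriv catalanGF)
      (2 * catalanGF x ^ 5 * (2 - x * catalanGF x ^ 2) / (1 - x * catalanGF x ^ 2) ^ 3) x := by
  have hT := hasDerivAt_catalanGF hx
  have hderiv : deriv catalanGF =ᶠ[𝓝 x] fun z ↦ catalanGF z ^ 3 / (2 - catalanGF z) :=
    (eventually_abs_lt hx).mono fun z hz ↦ (hasDerivAt_catalanGF hz).deriv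
  have h2 : 2 - catalanGF x ≠ 0 := sub_ne_zero.mpr (catalanGF_ne_two hx).symm
  refine (((hT.fun_pow 3).div (hT.const_sub 2) h2).congr_of_eventuallyEq hderiv).congr_deriv ?_
  have hquad : x * catalanGF x ^ 2 = catalanGF x - 1 := by
    linear_combination -catalanGF_eq_one_add_mul_sq hx
  rw [hquad, show 1 - (catalanGF x - 1) = 2 - catalanGF x by ring]
  field_simp
  ring
end

section
/- The sequence a_k defined by a_0 = 1 and, for k \ge 1, a_k = \sum_{l=1}^{k} \sum_{k_1 + \cdots + k_l = k - l} a_{k_1} \cdots a_{k_l} (sum over nonnegative integers k_1,...,k_l) equals the Catalan numbers: a_k = Cat(k) for all k \ge 0. -/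
/-!
Write `C(X) = ∑ aₖ Xᵏ`. The recursion says `C = ∑_{l ≥ 0} (X C)^l`, i.e. `C = 1 + X C²`, which is the
functional equation of the Catalan generating function. Concretely, splitting off the first entry
of each tuple turns the right-hand side of the recursion at `n + 1` into `∑_{i + j = n} aᵢ aⱼ`,
Segner's recurrence for the Catalan numbers.
-/

open Finset Finset.Nat

lemma sum_antidiagonalTuple_succ {M : Type*} [AddCommMonoid M] (k n : ℕ)
    (f : (Fin (k + 1) → ℕ) → M) :
    ∑ t ∈ antidiagonalTuple (k + 1) n, f t
      = ∑ p ∈ antidiagonal n, ∑ t ∈ antidiagonalTuple k p.2, f (Fin.cons p.1 t) := by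
  rw [sum_sigma']
  refine sum_nbij' (fun t => ⟨(t 0, ∑ i, Fin.tail t i), Fin.tail t⟩)
    (fun p => Fin.cons p.1.1 p.2) ?_ ?_ ?_ ?_ ?_
  · intro t ht
    simpa [mem_antidiagonalTuple, Fin.sum_univ_succ, Fin.tail_def] using ht
  · rintro ⟨⟨i, j⟩, t⟩ hp
    simp_all [mem_antidiagonalTuple, Fin.sum_cons]
  · intro t _
    exact Fin.cons_self_tail t
  · rintro ⟨⟨i, j⟩, t⟩ hp
    simp_all [mem_antidiagonalTuple]
  · intro t _
    rw [Fin.cons_self_tail t]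

lemma sum_antidiagonal_antidiagonal_comm {M : Type*} [AddCommMonoid M] (f : ℕ → ℕ → ℕ → M)
    (n : ℕ) :
    ∑ p ∈ antidiagonal n, ∑ q ∈ antidiagonal p.2, f p.1 q.1 q.2
      = ∑ p ∈ antidiagonal n, ∑ q ∈ antidiagonal p.2, f q.1 p.1 q.2 := by
  simp only [sum_antidiagonal_eq_sum_range_succ_mk]
  rw [sum_comm' (t' := range (n + 1)) (s' := fun i => range (n - i).succ)]
  · refine sum_congr rfl fun i _ => sum_congr rfl fun l _ => ?_
    congr 1; omega
  · intro l i
    simp only [mem_range]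
    omega

variable {R : Type*} [CommSemiring R]

def tupleProdSum (c : ℕ → R) (l m : ℕ) : R :=
  ∑ t ∈ antidiagonalTuple l m, ∏ i, c (t i)

def compositionSum (c : ℕ → R) (n : ℕ) : R :=
  ∑ p ∈ antidiagonal n, tupleProdSum c p.1 p.2

lemma tupleProdSum_zero_zero (c : ℕ → R) : tupleProdSum c 0 0 = 1 := by
  simp [tupleProdSum]

lemma tupleProdSum_zero_succ (c : ℕ → R) (m : ℕ) : tupleProdSum c 0 (m + 1) = 0 := by
  simp [tupleProdSum, antidiagonalTuple_zero_succ]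

lemma tupleProdSum_succ (c : ℕ → R) (l m : ℕ) :
    tupleProdSum c (l + 1) m = ∑ p ∈ antidiagonal m, c p.1 * tupleProdSum c l p.2 := by
  simp only [tupleProdSum, sum_antidiagonalTuple_succ, Fin.prod_univ_succ, Fin.cons_zero,
    Fin.cons_succ, mul_sum]

lemma compositionSum_zero (c : ℕ → R) : compositionSum c 0 = 1 := by
  simp [compositionSum, tupleProdSum_zero_zero]

lemma compositionSum_succ (c : ℕ → R) (n : ℕ) :
    compositionSum c (n + 1) = ∑ p ∈ antidiagonal n, c p.1 * compositionSum c p.2 := by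
  simp only [compositionSum, sum_antidiagonal_succ, tupleProdSum_zero_succ, zero_add,
    tupleProdSum_succ, mul_sum]
  exact sum_antidiagonal_antidiagonal_comm (fun l i j => c i * tupleProdSum c l j) n

lemma compositionSum_succ_eq_sum_Icc (c : ℕ → R) (n : ℕ) :
    compositionSum c (n + 1) = ∑ l ∈ Icc 1 (n + 1), tupleProdSum c l (n + 1 - l) := by
  rw [compositionSum, sum_antidiagonal_eq_sum_range_succ (tupleProdSum c), sum_range_succ',
    Nat.sub_zero, tupleProdSum_zero_succ, add_zero, range_eq_Ico,
    sum_Ico_add' (fun l => tupleProdSum c l (n + 1 - l)), ← Ico_add_one_right_eq_Icc]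

theorem eq_catalan_of_succ_eq_sum_antidiagonal (a : ℕ → ℕ) (h0 : a 0 = 1)
    (hsucc : ∀ n, a (n + 1) = ∑ p ∈ antidiagonal n, a p.1 * a p.2) (n : ℕ) :
    a n = catalan n := by
  induction n using Nat.strong_induction_on with
  | _ n ih =>
    match n with
    | 0 => rw [h0, catalan_zero]
    | n + 1 =>
      rw [hsucc, catalan_succ']
      refine sum_congr rfl fun p hp => ?_
      rw [ih _ (Nat.lt_succ_of_le (HasAntidiagonal.antidiagonal.fst_le hp)),
        ih _ (Nat.lt_succ_of_le (HasAntidiagonal.antidiagonal.snd_le hp))]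

/-- The sequence defined by `a 0 = 1` and
`a k = ∑_{l=1}^{k} ∑_{k₁+⋯+k_l = k-l} a k₁ ⋯ a k_l` for `k ≥ 1`
equals the sequence of Catalan numbers. -/
theorem catalan_of_recursion (a : ℕ → ℕ) (h0 : a 0 = 1)
    (hrec : ∀ k, 1 ≤ k →
      a k = ∑ l ∈ Finset.Icc 1 k, ∑ t ∈ Finset.Nat.antidiagonalTuple l (k - l), ∏ i, a (t i)) :
    ∀ k, a k = catalan k := by
  have ha : ∀ n, a n = compositionSum a n
    | 0 => by rw [h0, compositionSum_zero]
    | n + 1 => by rw [compositionSum_succ_eq_sum_Icc, hrec _ n.succ_pos]; rfl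
  refine eq_catalan_of_succ_eq_sum_antidiagonal a h0 fun n => ?_
  rw [ha (n + 1), compositionSum_succ]
  simp only [← ha]
end

section
/- For real x with |x| < 2, the limit as \epsilon \to 0+ of -(1/\pi) Im( (1/16) (z - sqrt(z^2-4))^4 / sqrt(z^2-4) ) evaluated at z = x + i\epsilon equals (1/(2\pi)) (x^4 - 4x^2 + 2)/sqrt(4 - x^2). -/
open Complex Filter

/-- The branch of `√(z²-4)` that is holomorphic on the upper half-plane and behaves like `z`
at infinity, written as `√(z-2)·√(z+2)` with principal square roots. -/
noncomputable def sqBranch (z : ℂ) : ℂ := (z - 2) ^ ((1 : ℂ) / 2) * (z + 2) ^ ((1 : ℂ) / 2)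

/-!
On the closed upper half-plane the principal square root is given by the explicit formula
`√z = √((|z| + Re z)/2) + i √((|z| - Re z)/2)`, which is continuous there. Hence `sqBranch`
extends continuously from the upper half-plane to the segment `(-2, 2)`, where it takes the value
`i √(4 - x²)`, and the limit is simply the value of the expression at `z = x`. With
`s = √(4 - x²)` one has `Re (x - i s)⁴ = x⁴ - 6x²s² + s⁴ = 8 (x⁴ - 4x² + 2)`.
-/

open Topology

namespace Complex

lemma cpow_inv_two_eq_of_im_nonneg {z : ℂ} (hz : 0 ≤ z.im) :
    z ^ (2⁻¹ : ℂ) = √((‖z‖ + z.re) / 2) + √((‖z‖ - z.re) / 2) * I := by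
  apply Complex.ext <;> simp [cpow_inv_two_re, cpow_inv_two_im_eq_sqrt hz]

lemma continuousOn_cpow_inv_two_im_nonneg :
    ContinuousOn (fun z : ℂ => z ^ (2⁻¹ : ℂ)) {z | 0 ≤ z.im} :=
  ContinuousOn.congr (f := fun z : ℂ => (√((‖z‖ + z.re) / 2) : ℂ) + √((‖z‖ - z.re) / 2) * I)
    (by fun_prop) fun _ hz => cpow_inv_two_eq_of_im_nonneg hz

lemma ofReal_cpow_inv_two_of_nonneg {t : ℝ} (ht : 0 ≤ t) : (t : ℂ) ^ (2⁻¹ : ℂ) = √t := by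
  rw [cpow_inv_two_eq_of_im_nonneg (by simp)]
  simp [abs_of_nonneg ht]

lemma ofReal_cpow_inv_two_of_nonpos {t : ℝ} (ht : t ≤ 0) : (t : ℂ) ^ (2⁻¹ : ℂ) = √(-t) * I := by
  rw [cpow_inv_two_eq_of_im_nonneg (by simp)]
  have h₁ : (|t| + t) / 2 = 0 := by rw [abs_of_nonpos ht]; ring
  have h₂ : (|t| - t) / 2 = -t := by rw [abs_of_nonpos ht]; ring
  simp only [norm_real, Real.norm_eq_abs, ofReal_re, h₁, h₂, Real.sqrt_zero, ofReal_zero, zero_add]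

lemma tendsto_add_mul_I_nhdsWithin_im_nonneg {z : ℂ} (hz : 0 ≤ z.im) :
    Tendsto (fun ε : ℝ => z + ε * I) (𝓝[>] 0) (𝓝[{w | 0 ≤ w.im}] z) := by
  refine tendsto_nhdsWithin_of_tendsto_nhds_of_eventually_within _ ?_ ?_
  · have : Continuous (fun ε : ℝ => z + ε * I) := by fun_prop
    simpa using this.continuousWithinAt.tendsto (x := 0) (s := Set.Ioi 0)
  · filter_upwards [self_mem_nhdsWithin] with ε (hε : 0 < ε)
    simp only [add_im, mul_im, ofReal_re, I_im, ofReal_im, I_re]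
    linarith

end Complex

lemma continuousOn_sqBranch : ContinuousOn sqBranch {z | 0 ≤ z.im} := by
  have h := continuousOn_cpow_inv_two_im_nonneg
  unfold sqBranch
  simp only [one_div]
  refine (h.comp (by fun_prop) ?_).mul (h.comp (by fun_prop) ?_) <;> intro z hz <;> simpa using hz

lemma sqBranch_ofReal {x : ℝ} (hx : |x| < 2) : sqBranch x = √(4 - x ^ 2) * I := by
  obtain ⟨hx₁, hx₂⟩ := abs_lt.1 hx
  have h₁ : (x : ℂ) - 2 = ((x - 2 : ℝ) : ℂ) := by push_cast; ring
  have h₂ : (x : ℂ) + 2 = ((x + 2 : ℝ) : ℂ) := by push_cast; ring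
  rw [sqBranch, one_div, h₁, h₂, ofReal_cpow_inv_two_of_nonpos (by linarith),
    ofReal_cpow_inv_two_of_nonneg (by linarith), mul_right_comm, ← ofReal_mul,
    ← Real.sqrt_mul (by linarith)]
  congr 3
  ring

lemma density_of_boundary_value {x s : ℝ} (hs : s ^ 2 = 4 - x ^ 2) (hs₀ : s ≠ 0) :
    -(1 / Real.pi) * ((1 / 16) * ((x : ℂ) - s * I) ^ 4 / (s * I)).im
      = 1 / (2 * Real.pi) * (x ^ 4 - 4 * x ^ 2 + 2) / s := by
  have him : ((1 / 16) * ((x : ℂ) - s * I) ^ 4 / (s * I)).im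
      = -(x ^ 4 - 6 * x ^ 2 * s ^ 2 + s ^ 4) / (16 * s) := by
    simp only [div_im, mul_im, mul_re, pow_succ, pow_zero, normSq_apply, sub_re, sub_im, ofReal_re,
      ofReal_im, I_re, I_im, one_div, inv_re, inv_im, re_ofNat, im_ofNat, one_re, one_im]
    field_simp
    ring
  rw [him]
  field_simp
  linear_combination 2 * (s ^ 2 + 4 - x ^ 2 - 6 * x ^ 2) * hs

/-- For `|x| < 2`, the limit as `ε → 0⁺` of `-(1/π) Im((1/16)(z-√(z²-4))⁴/√(z²-4))` at
`z = x + iε` equals `(1/2π)(x⁴-4x²+2)/√(4-x²)`. -/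
theorem sigmaOne_density_from_stieltjes (x : ℝ) (hx : |x| < 2) :
    Tendsto (fun ε : ℝ =>
        -(1 / Real.pi) *
          ((1 / 16) * ((x + ε * I) - sqBranch (x + ε * I)) ^ 4 / sqBranch (x + ε * I)).im)
      (nhdsWithin 0 (Set.Ioi 0))
      (nhds (1 / (2 * Real.pi) * (x ^ 4 - 4 * x ^ 2 + 2) / Real.sqrt (4 - x ^ 2))) := by
  have hx4 : 0 < 4 - x ^ 2 := by nlinarith [abs_lt.1 hx]
  have hbranch : ContinuousWithinAt sqBranch {z | 0 ≤ z.im} x :=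
    continuousOn_sqBranch _ (by simp)
  have hbranch_ne : sqBranch x ≠ 0 := by
    simp [sqBranch_ofReal hx, (Real.sqrt_pos.2 hx4).ne']
  have hcont : ContinuousWithinAt
      (fun z : ℂ => -(1 / Real.pi) * ((1 / 16) * (z - sqBranch z) ^ 4 / sqBranch z).im)
      {z | 0 ≤ z.im} x :=
    (continuous_im.continuousAt.comp_continuousWithinAt
      ((continuousWithinAt_const.mul ((continuousWithinAt_id.sub hbranch).pow 4)).div
        hbranch hbranch_ne)).const_mul _
  have h := hcont.tendsto.comp (tendsto_add_mul_I_nhdsWithin_im_nonneg (by simp))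
  rwa [sqBranch_ofReal hx, density_of_boundary_value (Real.sq_sqrt hx4.le)
    (Real.sqrt_pos.2 hx4).ne'] at h
end

section
/- The signed measure with density g(x) = -(x^4 - 5x^2 + 4)/(2\pi sqrt(4-x^2)) on [-2,2] has total mass zero, and its Stieltjes transform equals (H(z)^4 - H(z)^2)/sqrt(z^2-4), where H(z) = (z - sqrt(z^2-4))/2. -/
open Complex

/-- The Stieltjes transform `H(z) = (z - √(z²-4))/2` of the semicircle law. -/
noncomputable def semicircleStieltjes (z : ℂ) : ℂ := (z - sqBranch z) / 2

/-!
On `[-2, 2]` the density is `(x² - 1) ρ(x)` with `ρ(x) = √(4 - x²) / (2π)` the semicircle density,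
whose moments of order `0, 1, 2` are `1, 0, 1`; this gives the mass. Writing
`(x² - 1) / (x - z) = x + z - (z² - 1) / (z - x)` reduces the Stieltjes transform to
`z - (z² - 1) H`, where `H = ∫ ρ(x) / (z - x) dx`, and `H² - z H + 1 = 0` turns this into
`-H³ = (H⁴ - H²) / (z - 2H)`.

To identify `H`, substitute `x = 2 cos θ`: the transform becomes a combination of elementary
integrals and `∫₀^π dθ / (z - 2 cos θ)`. For `z = H + 1/H` with `‖H‖ < 1` this integrand is a
multiple of the Poisson kernel `(1 - H²) / (1 - 2 H cos θ + H²)`, whose integral over `[0, π]` is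
`π`, with primitive `θ + i log (1 - H e^{iθ}) - i log (1 - H e^{-iθ})`.
-/

open scoped Real

lemma cpow_one_div_two_sq (u : ℂ) : (u ^ ((1 : ℂ) / 2)) ^ 2 = u := by
  rw [one_div, cpow_ofNat_inv_pow]

lemma cpow_one_div_two_re_pos {u : ℂ} (hu : u.im ≠ 0) : 0 < (u ^ ((1 : ℂ) / 2)).re := by
  rw [one_div, cpow_inv_two_re, Real.sqrt_pos]
  linarith [abs_re_lt_norm.2 hu, neg_abs_le u.re]

lemma cpow_one_div_two_im_pos {u : ℂ} (hu : 0 < u.im) : 0 < (u ^ ((1 : ℂ) / 2)).im := by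
  rw [one_div, cpow_inv_two_im_eq_sqrt hu.le, Real.sqrt_pos]
  linarith [abs_re_lt_norm.2 hu.ne', le_abs_self u.re]

lemma sqBranch_sq (z : ℂ) : sqBranch z ^ 2 = z ^ 2 - 4 := by
  rw [sqBranch, mul_pow, cpow_one_div_two_sq, cpow_one_div_two_sq]
  ring

lemma sqBranch_ne_zero {z : ℂ} (hz : z.im ≠ 0) : sqBranch z ≠ 0 := by
  have h2 : z - 2 ≠ 0 := fun h => hz (by simpa using congrArg im h)
  have h2' : z + 2 ≠ 0 := fun h => hz (by simpa using congrArg im h)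
  rw [← pow_ne_zero_iff two_ne_zero, sqBranch_sq, show z ^ 2 - 4 = (z - 2) * (z + 2) by ring]
  exact mul_ne_zero h2 h2'

lemma semicircleStieltjes_sq_sub_mul_add_one (z : ℂ) :
    semicircleStieltjes z ^ 2 - z * semicircleStieltjes z + 1 = 0 := by
  unfold semicircleStieltjes
  linear_combination sqBranch_sq z / 4

lemma norm_sub_lt_norm_add {a b : ℂ} (h : 0 < a.re * b.re + a.im * b.im) :
    ‖a - b‖ < ‖a + b‖ := by
  rw [← sq_lt_sq₀ (norm_nonneg _) (norm_nonneg _), Complex.sq_norm, Complex.sq_norm,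
    normSq_apply, normSq_apply]
  simp only [sub_re, sub_im, add_re, add_im]
  nlinarith

/-- The two roots `(z ∓ a b) / 2` of `H² - z H + 1` are `(a ∓ b)² / 4`, and their product is `1`. -/
lemma norm_half_sub_mul_lt_one {z a b : ℂ} (ha : a ^ 2 = z - 2) (hb : b ^ 2 = z + 2)
    (hab : 0 < a.re * b.re + a.im * b.im) : ‖(z - a * b) / 2‖ < 1 := by
  have hprod : ‖(z - a * b) / 2‖ * ‖(z + a * b) / 2‖ = 1 := by
    rw [← norm_mul, show (z - a * b) / 2 * ((z + a * b) / 2) = 1 by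
      linear_combination (-(z + 2) * ha - a ^ 2 * hb) / 4, norm_one]
  have hlt : ‖(z - a * b) / 2‖ < ‖(z + a * b) / 2‖ := by
    rw [show (z - a * b) / 2 = (a - b) ^ 2 / 4 by linear_combination -(ha + hb) / 4,
      show (z + a * b) / 2 = (a + b) ^ 2 / 4 by linear_combination -(ha + hb) / 4,
      norm_div, norm_div, norm_pow, norm_pow]
    have := norm_sub_lt_norm_add hab
    gcongr
    norm_num
  nlinarith [norm_nonneg ((z - a * b) / 2)]

lemma norm_semicircleStieltjes_lt_one {z : ℂ} (hz : 0 < z.im) :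
    ‖semicircleStieltjes z‖ < 1 := by
  have him : 0 < (z - 2).im ∧ 0 < (z + 2).im := by simpa using hz
  exact norm_half_sub_mul_lt_one (cpow_one_div_two_sq _) (cpow_one_div_two_sq _)
    (add_pos_of_pos_of_nonneg
      (mul_pos (cpow_one_div_two_re_pos him.1.ne') (cpow_one_div_two_re_pos him.2.ne'))
      (mul_pos (cpow_one_div_two_im_pos him.1) (cpow_one_div_two_im_pos him.2)).le)

lemma one_sub_two_mul_mul_cos_add_sq (r θ : ℂ) :
    1 - 2 * r * cos θ + r ^ 2 = (1 - r * exp (θ * I)) * (1 - r * exp (-θ * I)) := by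
  have h : exp (θ * I) * exp (-θ * I) = 1 := by rw [← exp_add]; ring_nf; exact exp_zero
  linear_combination -r * two_cos θ - r ^ 2 * h

lemma one_sub_mul_exp_ofReal_mul_I_mem_slitPlane {r : ℂ} (hr : ‖r‖ < 1) (θ : ℝ) :
    1 - r * exp (θ * I) ∈ slitPlane := by
  simpa [sub_eq_add_neg] using mem_slitPlane_of_norm_lt_one (z := -(r * exp (θ * I)))
    (by rwa [norm_neg, norm_mul, norm_exp_ofReal_mul_I, mul_one])

lemma one_sub_two_mul_mul_cos_add_sq_ne_zero {r : ℂ} (hr : ‖r‖ < 1) (θ : ℝ) :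
    1 - 2 * r * cos θ + r ^ 2 ≠ 0 := by
  rw [one_sub_two_mul_mul_cos_add_sq, ← ofReal_neg]
  exact mul_ne_zero (slitPlane_ne_zero (one_sub_mul_exp_ofReal_mul_I_mem_slitPlane hr θ))
    (slitPlane_ne_zero (one_sub_mul_exp_ofReal_mul_I_mem_slitPlane hr (-θ)))

lemma hasDerivAt_log_one_sub_mul_exp {r : ℂ} (hr : ‖r‖ < 1) (s θ : ℝ) :
    HasDerivAt (fun t : ℝ => log (1 - r * exp (↑(s * t) * I)))
      (-(r * (exp (↑(s * θ) * I) * (s * I))) / (1 - r * exp (↑(s * θ) * I))) θ := by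
  have hexp : HasDerivAt (fun t : ℝ => exp (↑(s * t) * I)) (exp (↑(s * θ) * I) * (s * I)) θ :=
    (((hasDerivAt_id θ).const_mul s).ofReal_comp.mul_const I).cexp.congr_deriv (by simp)
  exact ((hexp.const_mul r).const_sub 1).clog_real
    (one_sub_mul_exp_ofReal_mul_I_mem_slitPlane hr (s * θ))

theorem integral_poissonKernel {r : ℂ} (hr : ‖r‖ < 1) :
    ∫ θ in (0 : ℝ)..π, (1 - r ^ 2) / (1 - 2 * r * cos θ + r ^ 2) = (π : ℂ) := by
  let F : ℝ → ℂ := fun t =>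
    t + I * log (1 - r * exp (↑(1 * t) * I)) - I * log (1 - r * exp (↑(-1 * t) * I))
  have hF : ∀ θ : ℝ, HasDerivAt F ((1 - r ^ 2) / (1 - 2 * r * cos θ + r ^ 2)) θ := by
    intro θ
    refine (((hasDerivAt_id θ).ofReal_comp.add
      ((hasDerivAt_log_one_sub_mul_exp hr 1 θ).const_mul I)).sub
      ((hasDerivAt_log_one_sub_mul_exp hr (-1) θ).const_mul I)).congr_deriv ?_
    have h1 := slitPlane_ne_zero (one_sub_mul_exp_ofReal_mul_I_mem_slitPlane hr θ)
    have h2 := slitPlane_ne_zero (one_sub_mul_exp_ofReal_mul_I_mem_slitPlane hr (-θ))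
    rw [one_sub_two_mul_mul_cos_add_sq]
    have h : exp (θ * I) * exp (-θ * I) = 1 := by rw [← exp_add]; ring_nf; exact exp_zero
    push_cast at h1 h2 ⊢
    simp only [one_mul, neg_mul] at *
    generalize exp (θ * I) = u at *
    generalize exp (-(θ * I)) = v at *
    field_simp
    linear_combination (2 * r ^ 2 * u * v - r * u - r * v) * I_sq - r ^ 2 * h
  have hcont : Continuous fun θ : ℝ => (1 - r ^ 2) / (1 - 2 * r * cos θ + r ^ 2) :=
    Continuous.div (by fun_prop) (by fun_prop) (one_sub_two_mul_mul_cos_add_sq_ne_zero hr)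
  rw [intervalIntegral.integral_eq_sub_of_hasDerivAt (fun θ _ => hF θ)
    (hcont.intervalIntegrable _ _)]
  simp [F]

lemma one_sub_sq_ne_zero_of_norm_lt_one {H : ℂ} (hH : ‖H‖ < 1) : 1 - H ^ 2 ≠ 0 := by
  rw [sub_ne_zero]
  intro h
  have : ‖H ^ 2‖ < 1 := by rw [norm_pow]; exact pow_lt_one₀ (norm_nonneg H) hH two_ne_zero
  rw [← h, norm_one] at this
  exact lt_irrefl _ this

theorem integral_inv_sub_two_cos {z H : ℂ} (hH : ‖H‖ < 1) (hzH : H ^ 2 - z * H + 1 = 0) :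
    ∫ θ in (0 : ℝ)..π, 1 / (z - 2 * cos θ) = π * H / (1 - H ^ 2) := by
  have hH0 : H ≠ 0 := by rintro rfl; simp at hzH
  have hH2 := one_sub_sq_ne_zero_of_norm_lt_one hH
  have hkernel : ∀ θ : ℝ, 1 - 2 * H * cos θ + H ^ 2 = H * (z - 2 * cos θ) := fun θ => by
    linear_combination hzH
  have hpoint : ∀ θ : ℝ, 1 / (z - 2 * cos θ)
      = H / (1 - H ^ 2) * ((1 - H ^ 2) / (1 - 2 * H * cos θ + H ^ 2)) := fun θ => by
    have hne := one_sub_two_mul_mul_cos_add_sq_ne_zero hH θ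
    rw [hkernel] at hne ⊢
    have : z - 2 * cos θ ≠ 0 := right_ne_zero_of_mul hne
    field_simp
  simp_rw [hpoint, intervalIntegral.integral_const_mul, integral_poissonKernel hH]
  ring

noncomputable def semicircleDensity (x : ℝ) : ℝ := √(4 - x ^ 2) / (2 * π)

@[fun_prop]
lemma continuous_semicircleDensity : Continuous semicircleDensity := by
  unfold semicircleDensity; fun_prop

lemma semicircleDensity_two_mul_cos {θ : ℝ} (hθ : θ ∈ Set.Icc 0 π) :
    semicircleDensity (2 * Real.cos θ) = Real.sin θ / π := by
  have hsin : 0 ≤ Real.sin θ := Real.sin_nonneg_of_nonneg_of_le_pi hθ.1 hθ.2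
  rw [semicircleDensity, show 4 - (2 * Real.cos θ) ^ 2 = (2 * Real.sin θ) ^ 2 by
    linear_combination -4 * Real.sin_sq_add_cos_sq θ, Real.sqrt_sq (by positivity)]
  field_simp

theorem integral_semicircleDensity_smul {E : Type*} [NormedAddCommGroup E] [NormedSpace ℝ E]
    (f : ℝ → E) :
    ∫ x in (-2 : ℝ)..2, semicircleDensity x • f x
      = (2 / π) • ∫ θ in (0 : ℝ)..π, Real.sin θ ^ 2 • f (2 * Real.cos θ) := by
  have hsub := intervalIntegral.integral_deriv_smul_comp_of_deriv_nonpos (a := 0) (b := π)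
    (f := fun θ => 2 * Real.cos θ) (f' := fun θ => -(2 * Real.sin θ))
    (g := fun x => semicircleDensity x • f x) (by fun_prop)
    (fun θ _ => by simpa using (Real.hasDerivAt_cos θ).const_mul 2)
    (fun θ hθ => by
      rw [min_eq_left Real.pi_pos.le, max_eq_right Real.pi_pos.le] at hθ
      linarith [Real.sin_pos_of_pos_of_lt_pi hθ.1 hθ.2])
  simp only [Real.cos_zero, Real.cos_pi, Function.comp_apply, mul_one, mul_neg] at hsub
  rw [intervalIntegral.integral_symm, ← hsub, ← intervalIntegral.integral_neg,
    ← intervalIntegral.integral_smul]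
  refine intervalIntegral.integral_congr fun θ hθ => ?_
  rw [Set.uIcc_of_le Real.pi_pos.le] at hθ
  simp only [semicircleDensity_two_mul_cos hθ, smul_smul, ← neg_smul]
  congr 1
  ring

theorem integral_semicircleDensity : ∫ x in (-2 : ℝ)..2, semicircleDensity x = 1 := by
  simpa [integral_sin_sq, Real.pi_ne_zero] using integral_semicircleDensity_smul (fun _ => (1 : ℝ))

theorem integral_semicircleDensity_mul_self :
    ∫ x in (-2 : ℝ)..2, semicircleDensity x * x = 0 := by
  simpa [mul_left_comm _ (2 : ℝ)] using integral_semicircleDensity_smul (fun x => x)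

theorem integral_semicircleDensity_mul_sq :
    ∫ x in (-2 : ℝ)..2, semicircleDensity x * x ^ 2 = 1 := by
  have h := integral_semicircleDensity_smul (fun x => x ^ 2)
  simp only [smul_eq_mul, mul_pow, mul_left_comm _ ((2 : ℝ) ^ 2)] at h
  rw [h, intervalIntegral.integral_const_mul, integral_sin_sq_mul_cos_sq]
  simp [show (4 : ℝ) * π = (4 : ℕ) * π by norm_num, Real.sin_nat_mul_pi]
  field_simp
  norm_num

theorem integral_semicircleDensity_div_sub {z H : ℂ} (hH : ‖H‖ < 1)
    (hzH : H ^ 2 - z * H + 1 = 0) :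
    ∫ x in (-2 : ℝ)..2, (semicircleDensity x : ℂ) / (z - x) = H := by
  have hne : ∀ θ : ℝ, z - 2 * cos θ ≠ 0 := fun θ h =>
    one_sub_two_mul_mul_cos_add_sq_ne_zero hH θ (by linear_combination hzH + H * h)
  have hpoint : ∀ θ : ℝ, Real.sin θ ^ 2 • (1 / (z - ↑(2 * Real.cos θ)))
      = z / 4 + (Real.cos θ : ℂ) / 2 + (4 - z ^ 2) / 4 * (1 / (z - 2 * cos θ)) := fun θ => by
    have hθ := hne θ
    have hsc := sin_sq_add_cos_sq (θ : ℂ)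
    rw [real_smul]
    push_cast
    field_simp
    linear_combination 8 * hsc
  have hcont : Continuous fun θ : ℝ => 1 / (z - 2 * cos θ) :=
    continuous_const.div (by fun_prop) hne
  have hH2 := one_sub_sq_ne_zero_of_norm_lt_one hH
  have hH0 : H ≠ 0 := by rintro rfl; simp at hzH
  calc ∫ x in (-2 : ℝ)..2, (semicircleDensity x : ℂ) / (z - x)
      = ∫ x in (-2 : ℝ)..2, semicircleDensity x • (1 / (z - x)) := by
        simp only [real_smul, mul_one_div]
    _ = (2 / π) • ∫ θ in (0 : ℝ)..π,
          (z / 4 + (Real.cos θ : ℂ) / 2 + (4 - z ^ 2) / 4 * (1 / (z - 2 * cos θ))) := by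
        simp only [integral_semicircleDensity_smul, hpoint]
    _ = (2 / π) • (π * z / 4 + (4 - z ^ 2) / 4 * (π * H / (1 - H ^ 2))) := by
        have hcos : ∫ θ in (0 : ℝ)..π, ((Real.cos θ : ℂ) / 2) = 0 := by
          rw [intervalIntegral.integral_div, intervalIntegral.integral_ofReal, integral_cos]
          simp
        rw [intervalIntegral.integral_add (Continuous.intervalIntegrable (by fun_prop) _ _)
          ((hcont.intervalIntegrable _ _).const_mul _), intervalIntegral.integral_add
          (Continuous.intervalIntegrable (by fun_prop) _ _)
          (Continuous.intervalIntegrable (by fun_prop) _ _), hcos,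
          intervalIntegral.integral_const_mul, integral_inv_sub_two_cos hH hzH]
        simp
    _ = H := by
        rw [real_smul]
        push_cast
        field_simp
        linear_combination (2 * z + 4 * H) * hzH

lemma neg_quartic_div_eq_sq_sub_one_mul_semicircleDensity (x : ℝ) :
    -(x ^ 4 - 5 * x ^ 2 + 4) / (2 * π * √(4 - x ^ 2)) = (x ^ 2 - 1) * semicircleDensity x := by
  rw [semicircleDensity]
  rcases eq_or_ne √(4 - x ^ 2) 0 with hs | hs
  · simp [hs]
  · have hsq : √(4 - x ^ 2) ^ 2 = 4 - x ^ 2 :=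
      Real.sq_sqrt (le_of_lt (Real.sqrt_ne_zero'.1 hs))
    field_simp
    linear_combination (1 - x ^ 2) * hsq

theorem integral_sq_sub_one_mul_semicircleDensity :
    ∫ x in (-2 : ℝ)..2, (x ^ 2 - 1) * semicircleDensity x = 0 := by
  simp_rw [sub_one_mul, mul_comm _ (semicircleDensity _)]
  rw [intervalIntegral.integral_sub (Continuous.intervalIntegrable (by fun_prop) _ _)
    (Continuous.intervalIntegrable (by fun_prop) _ _), integral_semicircleDensity_mul_sq,
    integral_semicircleDensity, sub_self]

theorem integral_sq_sub_one_mul_semicircleDensity_div_sub {z H : ℂ} (hz : z.im ≠ 0)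
    (hH : ‖H‖ < 1) (hzH : H ^ 2 - z * H + 1 = 0) :
    ∫ x in (-2 : ℝ)..2, (((x ^ 2 - 1) * semicircleDensity x : ℝ) : ℂ) / (x - z) = -H ^ 3 := by
  have hne : ∀ x : ℝ, z - x ≠ 0 := fun x h => hz (by simpa using congrArg im h)
  have hpoint : ∀ x : ℝ, (((x ^ 2 - 1) * semicircleDensity x : ℝ) : ℂ) / (x - z)
      = ((semicircleDensity x * x : ℝ) : ℂ) + z * (semicircleDensity x : ℂ)
        - (z ^ 2 - 1) * ((semicircleDensity x : ℂ) / (z - x)) := fun x => by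
    have hzx := hne x
    have hxz : (x : ℂ) - z ≠ 0 := fun h => hzx (by linear_combination -h)
    push_cast
    field_simp
    ring
  simp_rw [hpoint]
  rw [intervalIntegral.integral_sub, intervalIntegral.integral_add,
    intervalIntegral.integral_const_mul, intervalIntegral.integral_const_mul,
    intervalIntegral.integral_ofReal, intervalIntegral.integral_ofReal,
    integral_semicircleDensity_mul_self, integral_semicircleDensity,
    integral_semicircleDensity_div_sub hH hzH]
  · push_cast
    linear_combination (z + H) * hzH
  all_goals exact Continuous.intervalIntegrable (by fun_prop (disch := exact hne _)) _ _

/-- The signed measure with density `g(x) = -(x⁴-5x²+4)/(2π√(4-x²))` on `[-2,2]` has total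
mass zero, and its Stieltjes transform `∫ g(x)/(x-z) dx` equals `(H(z)⁴-H(z)²)/√(z²-4)`,
where `H(z) = (z-√(z²-4))/2`. -/
theorem sigmaHatOne_mass_and_stieltjes :
    (∫ x in (-2 : ℝ)..2, -(x ^ 4 - 5 * x ^ 2 + 4) / (2 * Real.pi * Real.sqrt (4 - x ^ 2)))
        = 0 ∧
      ∀ z : ℂ, 0 < z.im →
        (∫ x in (-2 : ℝ)..2,
            Complex.ofReal (-(x ^ 4 - 5 * x ^ 2 + 4) / (2 * Real.pi * Real.sqrt (4 - x ^ 2))) /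
              ((x : ℂ) - z))
          = (semicircleStieltjes z ^ 4 - semicircleStieltjes z ^ 2) / sqBranch z := by
  simp_rw [neg_quartic_div_eq_sq_sub_one_mul_semicircleDensity]
  refine ⟨?_, fun z hz => ?_⟩
  · exact integral_sq_sub_one_mul_semicircleDensity
  · have hzH := semicircleStieltjes_sq_sub_mul_add_one z
    rw [integral_sq_sub_one_mul_semicircleDensity_div_sub hz.ne'
        (norm_semicircleStieltjes_lt_one hz) hzH,
      eq_div_iff (sqBranch_ne_zero hz.ne'),
      show sqBranch z = z - 2 * semicircleStieltjes z by unfold semicircleStieltjes; ring]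
    linear_combination (semicircleStieltjes z) ^ 2 * hzH
end
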